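/- arXiv:math/0609648 — 2 statements merged into one kernel-verified Lean document; each statement's English description precedes it below -/
import Mathlib

section
/- Let n ≥ 2, let ω_{n-1} be the (n-1)-dimensional measure of the unit sphere in ℝ^n, and set c_n = (ω_{n-1}/n)^{1/(n-1)}. Define w(x) = -n·log(1 + c_n·|x|^{n/(n-1)}). Then ∫_{ℝ^n} e^{w(x)} dx = 1. -/
/-!
In polar coordinates the integral becomes `n |B| ∫₀^∞ r^(n-1) (1 + c r^p)^(-n) dr` with
`p = n/(n-1)`. Writing `a = n - 1`, the integrand is `r^(pa-1) (1 + c r^p)^(-(a+1))`, whose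
primitive `(c r^p / (1 + c r^p))^a / (a p c^a)` rises from `0` to `1/(a p c^a)`. The choice of `c`
makes `a p c^a = n c^(n-1) = n |B|`.
-/

open MeasureTheory Real Set Filter Topology

theorem hasDerivAt_div_one_add_rpow {a t : ℝ} (ht : 0 < t) :
    HasDerivAt (fun t => (t / (1 + t)) ^ a) (a * t ^ (a - 1) * (1 + t) ^ (-(a + 1))) t := by
  have h1t : 0 < 1 + t := by linarith
  have hq : HasDerivAt (fun t => t / (1 + t)) (1 / (1 + t) ^ 2) t := by
    refine ((hasDerivAt_id t).div ((hasDerivAt_id t).const_add 1) h1t.ne').congr_deriv ?_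
    simp only [id]
    ring
  convert hq.rpow_const (p := a) (Or.inl (div_pos ht h1t).ne') using 1
  rw [div_rpow ht.le h1t.le, show -(a + 1) = -(a - 1) - 2 by ring,
    rpow_sub h1t, rpow_neg h1t.le, rpow_two]
  field_simp

theorem hasDerivAt_mul_rpow_div_one_add_mul_rpow {a c p r : ℝ} (hc : 0 < c) (hr : 0 < r) :
    HasDerivAt (fun r => (c * r ^ p / (1 + c * r ^ p)) ^ a)
      (a * p * c ^ a * (r ^ (p * a - 1) * (1 + c * r ^ p) ^ (-(a + 1)))) r := by
  have hu : HasDerivAt (fun r => c * r ^ p) (c * (p * r ^ (p - 1))) r :=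
    (hasDerivAt_rpow_const (Or.inl hr.ne')).const_mul c
  refine ((hasDerivAt_div_one_add_rpow (a := a) (by positivity)).comp r hu).congr_deriv ?_
  have hrp : 0 < r ^ p := rpow_pos_of_pos hr p
  rw [mul_rpow hc.le hrp.le, ← rpow_mul hr.le, show p * a - 1 = p * (a - 1) + (p - 1) by ring,
    rpow_add hr, show c ^ a = c ^ (a - 1) * c by rw [← rpow_add_one hc.ne']; ring_nf]
  ring

theorem integral_Ioi_rpow_mul_one_add_mul_rpow_neg {a c p : ℝ} (ha : 0 < a) (hc : 0 < c)
    (hp : 0 < p) :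
    ∫ r in Ioi (0 : ℝ), r ^ (p * a - 1) * (1 + c * r ^ p) ^ (-(a + 1)) =
      (a * p * c ^ a)⁻¹ := by
  set F : ℝ → ℝ := fun r => (c * r ^ p / (1 + c * r ^ p)) ^ a
  have hcont : ContinuousWithinAt F (Ici 0) 0 := by
    have hu : ContinuousAt (fun r : ℝ => c * r ^ p) 0 :=
      continuousAt_const.mul (continuousAt_rpow_const 0 p (Or.inr hp.le))
    refine ContinuousAt.continuousWithinAt ?_
    exact (hu.div (continuousAt_const.add hu) (by simp [zero_rpow hp.ne'])).rpow_const
      (Or.inr ha.le)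
  have hlim : Tendsto F atTop (𝓝 1) := by
    have hu : Tendsto (fun r : ℝ => c * r ^ p) atTop atTop :=
      (tendsto_rpow_atTop hp).const_mul_atTop hc
    have hq : Tendsto (fun u : ℝ => u / (1 + u)) atTop (𝓝 1) := by
      have h : Tendsto (fun u : ℝ => 1 - (1 + u)⁻¹) atTop (𝓝 (1 - 0)) :=
        (tendsto_inv_atTop_zero.comp (tendsto_atTop_add_const_left _ 1 tendsto_id)).const_sub 1
      rw [sub_zero] at h
      refine h.congr' ?_
      filter_upwards [eventually_gt_atTop 0] with u hu
      field_simp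
      ring
    simpa using (hq.comp hu).rpow_const (p := a) (Or.inl one_ne_zero)
  have key := integral_Ioi_of_hasDerivAt_of_nonneg hcont
    (fun r hr => hasDerivAt_mul_rpow_div_one_add_mul_rpow hc hr)
    (fun r (hr : 0 < r) => by positivity) hlim
  have hF0 : F 0 = 0 := by simp [F, zero_rpow hp.ne', zero_rpow ha.ne']
  rw [hF0, sub_zero, integral_const_mul] at key
  have : a * p * c ^ a ≠ 0 := by positivity
  field_simp
  linarith

theorem stmt_7 (n : ℕ) (hn : 2 ≤ n)
    (ω : ℝ) (hω : ω = n * (volume (Metric.ball (0 : EuclideanSpace ℝ (Fin n)) 1)).toReal)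
    (c : ℝ) (hc : c = (ω / n) ^ ((1 : ℝ) / ((n : ℝ) - 1))) :
    ∫ x : EuclideanSpace ℝ (Fin n),
        Real.exp (-(n : ℝ) * Real.log (1 + c * ‖x‖ ^ ((n : ℝ) / ((n : ℝ) - 1)))) = 1 := by
  have : Nonempty (Fin n) := ⟨⟨0, by omega⟩⟩
  set V := (volume (Metric.ball (0 : EuclideanSpace ℝ (Fin n)) 1)).toReal
  set a : ℝ := (n : ℝ) - 1
  set p : ℝ := n / a
  have ha : 0 < a := by
    have : (2 : ℝ) ≤ n := by exact_mod_cast hn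
    linarith
  have hpa : p * a = n := div_mul_cancel₀ _ ha.ne'
  have hV : 0 < V :=
    ENNReal.toReal_pos (Metric.measure_ball_pos volume _ one_pos).ne' measure_ball_lt_top.ne
  have hcV : c ^ a = V := by
    rw [hc, hω, mul_div_cancel_left₀ _ (by positivity), ← rpow_mul hV.le,
      one_div_mul_cancel ha.ne', rpow_one]
  have hcpos : 0 < c := by rw [hc, hω]; positivity
  set f : ℝ → ℝ := fun r => (1 + c * r ^ p) ^ (-(a + 1))
  have hradial :
      (fun x : EuclideanSpace ℝ (Fin n) => exp (-(n : ℝ) * log (1 + c * ‖x‖ ^ p))) =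
        fun x => f ‖x‖ := by
    funext x
    show _ = (1 + c * ‖x‖ ^ p) ^ (-(a + 1))
    rw [sub_add_cancel, rpow_def_of_pos (x := 1 + c * ‖x‖ ^ p) (by positivity), mul_comm]
  rw [hradial, integral_fun_norm_addHaar volume f, finrank_euclideanSpace_fin]
  calc _ = n * V * ∫ r in Ioi (0 : ℝ), r ^ (p * a - 1) * f r := by
        rw [hpa, ← Nat.cast_pred (by omega)]
        simp only [rpow_natCast, nsmul_eq_mul, smul_eq_mul, mul_assoc, measureReal_def, V]
    _ = 1 := by
        rw [integral_Ioi_rpow_mul_one_add_mul_rpow_neg ha hcpos (by positivity), mul_comm _ p,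
          hpa, hcV]
        field_simp
end

section
/- Let n ≥ 2 and suppose w : ℝ^n → ℝ is a radially symmetric C^1 solution of the n-Laplace equation -div(|∇w|^{n-2}∇w) = (n·α_n/(n-1))^{n-1}·e^w on ℝ^n with w(0) = 0 = max w, where α_n = n·ω_{n-1}^{1/(n-1)}. Then w(x) = -n·log(1 + c_n·|x|^{n/(n-1)}) with c_n = (ω_{n-1}/n)^{1/(n-1)}. -/
/-!
Integrating the radial equation once from the origin, where the flux `r^{n-1}|f'|^{n-2}f'`
vanishes because `w` is `C¹`, turns it into the first-order equation
`f'(r) = -K M_f(r)^{1/(n-1)} / r` with `M_f(r) = ∫₀ʳ t^{n-1} e^{f(t)} dt` and `K = nα/(n-1)`.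
The bubble `-n log(1 + c r^{n/(n-1)})` solves the same equation (its mass is explicit, and the
normalisation of `c` is exactly what makes the constants match). Solutions with `f(0) = 0` and
`f ≤ 0` are unique: on `[0, b]` the mass is bounded below by a multiple of `r^n`, so
`M^{1/(n-1)}` is Lipschitz there, `|f' - g'|(t)` is bounded by a multiple of `sup_{[0,t]} |f - g|`,
and a Gronwall-type stepping argument forces `f = g`.
-/

open MeasureTheory Set Filter Topology intervalIntegral Real

theorem natCast_sub_one_pos {n : ℕ} (hn : 2 ≤ n) : (0 : ℝ) < n - 1 := by
  have : (2 : ℝ) ≤ n := by exact_mod_cast hn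
  linarith

theorem abs_rpow_sub_rpow_le {p m x y : ℝ} (hp : 0 < p) (hp1 : p ≤ 1) (hm : 0 < m)
    (hx : m ≤ x) (hy : m ≤ y) : |x ^ p - y ^ p| ≤ p * m ^ (p - 1) * |x - y| := by
  have hderiv : ∀ t ∈ Ici m, HasDerivWithinAt (fun t : ℝ => t ^ p) (p * t ^ (p - 1)) (Ici m) t :=
    fun t ht => (hasDerivAt_rpow_const (Or.inl (hm.trans_le ht).ne')).hasDerivWithinAt
  have hbound : ∀ t ∈ Ici m, ‖p * t ^ (p - 1)‖ ≤ p * m ^ (p - 1) := fun t ht => by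
    rw [norm_of_nonneg (by have := hm.trans_le ht; positivity)]
    exact mul_le_mul_of_nonneg_left (rpow_le_rpow_of_nonpos hm ht (by linarith)) hp.le
  simpa only [norm_eq_abs] using
    (convex_Ici m).norm_image_sub_le_of_norm_hasDerivWithin_le hderiv hbound hy hx

theorem abs_exp_sub_exp_le {x y : ℝ} (hx : x ≤ 0) (hy : y ≤ 0) :
    |exp x - exp y| ≤ |x - y| := by
  have hbound : ∀ t ∈ Iic (0 : ℝ), ‖exp t‖ ≤ 1 := fun t ht => by
    rw [norm_of_nonneg (exp_pos t).le]
    exact exp_le_one_iff.mpr ht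
  simpa only [norm_eq_abs, one_mul] using
    (convex_Iic 0).norm_image_sub_le_of_norm_hasDerivWithin_le
      (fun t _ => (hasDerivAt_exp t).hasDerivWithinAt) hbound hy hx

/-- On each step of length `δ < 1 / L` past the zero set of `h`, the maximum of `|h|` is at most
`L δ` times itself. -/
theorem eqOn_zero_of_abs_deriv_le {h h' : ℝ → ℝ} {b L : ℝ} (hL : 0 ≤ L)
    (hc : ContinuousOn h (Icc 0 b)) (h0 : h 0 = 0)
    (hd : ∀ t ∈ Ioo 0 b, HasDerivAt h (h' t) t)
    (hbound : ∀ t ∈ Ioo 0 b, ∀ M, (∀ s ∈ Icc 0 t, |h s| ≤ M) → |h' t| ≤ L * M) :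
    EqOn h 0 (Icc 0 b) := by
  set δ := 1 / (L + 1) with hδ
  have hδ0 : 0 < δ := by positivity
  have hLδ : L * δ < 1 := by rw [hδ, mul_one_div, div_lt_one (by linarith)]; linarith
  suffices H : ∀ j : ℕ, ∀ t ∈ Icc 0 b, t ≤ j * δ → h t = 0 by
    intro t ht
    obtain ⟨j, hj⟩ := exists_nat_ge (t / δ)
    exact H j t ht ((div_le_iff₀ hδ0).mp hj)
  intro j
  induction j with
  | zero =>
    intro t ht htj
    rw [show t = 0 by simp at htj; linarith [ht.1], h0]
  | succ j ih =>
    intro t ht htj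
    set T := min b ((j + 1 : ℕ) * δ)
    have hT : t ∈ Icc 0 T := ⟨ht.1, le_min ht.2 htj⟩
    have hTb : Icc 0 T ⊆ Icc 0 b := Icc_subset_Icc_right (min_le_left _ _)
    obtain ⟨ts, hts, hts_max⟩ := isCompact_Icc.exists_isMaxOn ⟨t, hT⟩ ((hc.mono hTb).abs)
    have hmax : ∀ s ∈ Icc 0 T, |h s| ≤ |h ts| := hts_max
    suffices |h ts| ≤ L * δ * |h ts| by
      have := hmax t hT
      have := abs_nonneg (h ts)
      exact abs_nonpos_iff.mp (by nlinarith)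
    rcases le_or_gt ts (j * δ) with hle | hlt
    · rw [ih ts (hTb hts) hle, abs_zero, mul_zero]
    · have ha : (0 : ℝ) ≤ j * δ := by positivity
      have hab : Icc (j * δ) ts ⊆ Icc 0 b := Icc_subset_Icc ha (hTb hts).2
      obtain ⟨c, hc_mem, hc_eq⟩ := exists_hasDerivAt_eq_slope h h' hlt (hc.mono hab)
        fun x hx => hd x ⟨ha.trans_lt hx.1, hx.2.trans_le (hTb hts).2⟩
      rw [ih _ ⟨ha, hlt.le.trans (hTb hts).2⟩ le_rfl, sub_zero,
        eq_div_iff (sub_pos.mpr hlt).ne'] at hc_eq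
      have hc_bound := hbound c ⟨ha.trans_lt hc_mem.1, hc_mem.2.trans_le (hTb hts).2⟩ |h ts|
        fun s hs => hmax s ⟨hs.1, hs.2.trans (hc_mem.2.le.trans hts.2)⟩
      have hlen : ts - j * δ ≤ δ := by
        have : ts ≤ (j + 1 : ℕ) * δ := hts.2.trans (min_le_right _ _)
        push_cast at this
        linarith
      calc |h ts| = |h' c| * (ts - j * δ) := by
            rw [← hc_eq, abs_mul, abs_of_pos (sub_pos.mpr hlt)]
        _ ≤ L * |h ts| * δ := by gcongr
        _ = L * δ * |h ts| := by ring

theorem eq_neg_rpow_div_of_pow_mul_abs_pow_mul_eq {n : ℕ} (hn : 2 ≤ n) {r x A : ℝ} (hr : 0 < r)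
    (hA : 0 ≤ A) (h : r ^ (n - 1) * |x| ^ (n - 2) * x = -A) :
    x = -A ^ (1 / ((n : ℝ) - 1)) / r := by
  obtain ⟨k, rfl⟩ : ∃ k, n = k + 2 := ⟨n - 2, by omega⟩
  have hx : x ≤ 0 := by
    by_contra! hx
    have : 0 < r ^ (k + 2 - 1) * |x| ^ (k + 2 - 2) * x := by positivity
    linarith
  have hpow : (r * -x) ^ (k + 1) = A := by
    rw [abs_of_nonpos hx, show k + 2 - 1 = k + 1 by omega, show k + 2 - 2 = k by omega] at h
    calc (r * -x) ^ (k + 1) = -(r ^ (k + 1) * (-x) ^ k * x) := by ring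
      _ = A := by rw [h, neg_neg]
  have hexp : 1 / ((k + 2 : ℕ) - 1 : ℝ) = ((k + 1 : ℕ) : ℝ)⁻¹ := by push_cast; ring
  rw [hexp, ← hpow, pow_rpow_inv_natCast (by nlinarith) (by omega)]
  field_simp

theorem exists_continuous_hasDerivAt_of_contDiff_comp_norm {E : Type*} [NormedAddCommGroup E]
    [NormedSpace ℝ E] [Nontrivial E] {w : E → ℝ} {f : ℝ → ℝ} (hw : ∀ x, w x = f ‖x‖)
    (hC1 : ContDiff ℝ 1 w) : ∃ D : ℝ → ℝ, Continuous D ∧ ∀ t, 0 < t → HasDerivAt f (D t) t := by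
  obtain ⟨e, he⟩ := exists_norm_eq E zero_le_one
  have hφ : ContDiff ℝ 1 fun t : ℝ => w (t • e) := hC1.comp (contDiff_id.smul contDiff_const)
  refine ⟨deriv fun t : ℝ => w (t • e), hφ.continuous_deriv le_rfl, fun t ht => ?_⟩
  have hev : (fun s : ℝ => w (s • e)) =ᶠ[𝓝 t] f := by
    filter_upwards [Ioi_mem_nhds ht] with s hs
    rw [hw, norm_smul, he, mul_one, norm_of_nonneg hs.le]
  exact ((hφ.differentiable one_ne_zero t).hasDerivAt).congr_of_eventuallyEq hev.symm

/-- For `w = f ∘ ‖·‖` on `ℝⁿ`, `∫_{B_r} e^w = ω_{n-1} * radialMass n f r`. -/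
noncomputable def radialMass (n : ℕ) (f : ℝ → ℝ) (r : ℝ) : ℝ :=
  ∫ t in (0 : ℝ)..r, t ^ (n - 1) * exp (f t)

theorem integral_pow_pred {n : ℕ} (hn : 1 ≤ n) (r : ℝ) :
    ∫ t in (0 : ℝ)..r, t ^ (n - 1) = r ^ n / n := by
  rw [integral_pow, Nat.sub_add_cancel hn, zero_pow (by omega), sub_zero, Nat.cast_sub hn]
  simp

section radialMass

variable {n : ℕ} {f g : ℝ → ℝ} {r : ℝ}

theorem intervalIntegrable_radialMass_integrand (hf : ContinuousOn f (Ici 0)) (hr : 0 ≤ r) :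
    IntervalIntegrable (fun t => t ^ (n - 1) * exp (f t)) volume 0 r :=
  (((continuous_pow _).continuousOn.mul (continuous_exp.comp_continuousOn hf)).mono
    (by rw [uIcc_of_le hr]; exact Icc_subset_Ici_self)).intervalIntegrable

theorem radialMass_nonneg (hr : 0 ≤ r) : 0 ≤ radialMass n f r :=
  integral_nonneg hr fun t ht => by have := ht.1; positivity

theorem mul_pow_div_le_radialMass (hn : 1 ≤ n) (hf : ContinuousOn f (Ici 0)) (hr : 0 ≤ r)
    {m : ℝ} (hm : ∀ s ∈ Icc 0 r, m ≤ exp (f s)) : m * r ^ n / n ≤ radialMass n f r := by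
  rw [mul_div_assoc, ← integral_pow_pred hn, ← intervalIntegral.integral_const_mul]
  refine integral_mono_on hr ((by fun_prop : Continuous _).intervalIntegrable _ _)
    (intervalIntegrable_radialMass_integrand hf hr) fun s hs => ?_
  rw [mul_comm]
  exact mul_le_mul_of_nonneg_left (hm s hs) (pow_nonneg hs.1 _)

theorem abs_radialMass_sub_le (hn : 1 ≤ n) (hf : ContinuousOn f (Ici 0))
    (hg : ContinuousOn g (Ici 0)) (hr : 0 ≤ r) (hf0 : ∀ s ∈ Icc 0 r, f s ≤ 0)
    (hg0 : ∀ s ∈ Icc 0 r, g s ≤ 0) {M : ℝ} (hM : ∀ s ∈ Icc 0 r, |f s - g s| ≤ M) :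
    |radialMass n f r - radialMass n g r| ≤ M * r ^ n / n := by
  rw [radialMass, radialMass, ← integral_sub (intervalIntegrable_radialMass_integrand hf hr)
    (intervalIntegrable_radialMass_integrand hg hr), mul_div_assoc, ← integral_pow_pred hn,
    ← intervalIntegral.integral_const_mul, ← norm_eq_abs]
  refine norm_integral_le_of_norm_le hr ?_ ((by fun_prop : Continuous _).intervalIntegrable _ _)
  refine Eventually.of_forall fun s hs => ?_
  have hs' : s ∈ Icc 0 r := Ioc_subset_Icc_self hs
  rw [← mul_sub, norm_mul, norm_pow, norm_of_nonneg hs.1.le, mul_comm M, norm_eq_abs]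
  exact mul_le_mul_of_nonneg_left
    ((abs_exp_sub_exp_le (hf0 s hs') (hg0 s hs')).trans (hM s hs')) (pow_nonneg hs.1.le _)

theorem abs_radialMass_rpow_div_sub_le (hn : 2 ≤ n) {p : ℝ} (hp : ((n : ℝ) - 1) * p = 1)
    (hf : ContinuousOn f (Ici 0)) (hg : ContinuousOn g (Ici 0)) (hr : 0 < r)
    (hf0 : ∀ s ∈ Icc 0 r, f s ≤ 0) (hg0 : ∀ s ∈ Icc 0 r, g s ≤ 0) {m M : ℝ} (hm : 0 < m)
    (hmf : ∀ s ∈ Icc 0 r, m ≤ exp (f s)) (hmg : ∀ s ∈ Icc 0 r, m ≤ exp (g s))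
    (hM : ∀ s ∈ Icc 0 r, |f s - g s| ≤ M) :
    |radialMass n f r ^ p / r - radialMass n g r ^ p / r| ≤
      p * (m / n) ^ (p - 1) / n * r ^ p * M := by
  have hn1 : (1 : ℝ) ≤ n - 1 := by
    have : (2 : ℝ) ≤ n := by exact_mod_cast hn
    linarith
  have hp0 : 0 < p := pos_of_mul_pos_right (hp.symm ▸ one_pos) (by linarith)
  have hp1 : p ≤ 1 := by nlinarith
  have hn0 : (0 : ℝ) < n := by linarith
  set μ := m * r ^ n / n
  have hμ : 0 < μ := by positivity
  have hlip := abs_rpow_sub_rpow_le hp0 hp1 hμ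
    (mul_pow_div_le_radialMass (n := n) (by omega) hf hr.le hmf)
    (mul_pow_div_le_radialMass (n := n) (by omega) hg hr.le hmg)
  have hdiff := abs_radialMass_sub_le (n := n) (by omega) hf hg hr.le hf0 hg0 hM
  have hμp : μ ^ (p - 1) * r ^ n / r = (m / n) ^ (p - 1) * r ^ p := by
    rw [show μ = m / n * (r ^ (n : ℝ)) by simp [μ]; ring, mul_rpow (by positivity) (by positivity),
      ← rpow_mul hr.le, mul_assoc, ← rpow_natCast, mul_div_assoc, ← rpow_add hr,
      ← rpow_sub_one hr.ne']
    congr 2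
    linear_combination hp
  calc |radialMass n f r ^ p / r - radialMass n g r ^ p / r|
      = |radialMass n f r ^ p - radialMass n g r ^ p| / r := by
        rw [← sub_div, abs_div, abs_of_pos hr]
    _ ≤ p * μ ^ (p - 1) * (M * r ^ n / n) / r := by
        gcongr
        exact hlip.trans (mul_le_mul_of_nonneg_left hdiff (by positivity))
    _ = p * (μ ^ (p - 1) * r ^ n / r) / n * M := by ring
    _ = p * (m / n) ^ (p - 1) / n * r ^ p * M := by rw [hμp]; ring

/-- The flux `s ^ (n - 1) * |D s| ^ (n - 2) * D s` vanishes at `0` because `D` is continuous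
there, so integrating the equation from `0` expresses the flux through the mass. -/
theorem eq_neg_mul_radialMass_rpow_div (hn : 2 ≤ n) {K : ℝ} (hK : 0 ≤ K) {D : ℝ → ℝ}
    (hfc : ContinuousOn f (Ici 0)) (hD : Continuous D)
    (hode : ∀ r, 0 < r → HasDerivAt (fun s => s ^ (n - 1) * |D s| ^ (n - 2) * D s)
      (-(r ^ (n - 1) * K ^ (n - 1) * exp (f r))) r) (hr : 0 < r) :
    D r = -K * radialMass n f r ^ (1 / ((n : ℝ) - 1)) / r := by
  have hflux : r ^ (n - 1) * |D r| ^ (n - 2) * D r = -(K ^ (n - 1) * radialMass n f r) := by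
    have hrhs : (fun t => -(t ^ (n - 1) * K ^ (n - 1) * exp (f t))) =
        fun t => -K ^ (n - 1) * (t ^ (n - 1) * exp (f t)) := by ext; ring
    have hftc := integral_eq_sub_of_hasDerivAt_of_le hr.le (by fun_prop) (fun t ht => hode t ht.1)
      (hrhs ▸ (intervalIntegrable_radialMass_integrand hfc hr.le).const_mul _)
    rw [hrhs, intervalIntegral.integral_const_mul, zero_pow (by omega), zero_mul, zero_mul,
      sub_zero] at hftc
    rw [← hftc, radialMass, neg_mul]
  have hG := radialMass_nonneg (n := n) (f := f) hr.le
  rw [eq_neg_rpow_div_of_pow_mul_abs_pow_mul_eq hn hr (by positivity) hflux,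
    mul_rpow (by positivity) hG]
  obtain ⟨k, rfl⟩ : ∃ k, n = k + 2 := ⟨n - 2, by omega⟩
  rw [show k + 2 - 1 = k + 1 by omega, show 1 / (((k + 2 : ℕ) : ℝ) - 1) = ((k + 1 : ℕ) : ℝ)⁻¹ by
    push_cast; ring, pow_rpow_inv_natCast hK (by omega), neg_mul]

theorem eqOn_of_hasDerivAt_neg_mul_radialMass_rpow_div (hn : 2 ≤ n) {p K : ℝ}
    (hp : ((n : ℝ) - 1) * p = 1) (hK : 0 ≤ K) (hfc : ContinuousOn f (Ici 0))
    (hgc : ContinuousOn g (Ici 0)) (h0 : f 0 = g 0)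
    (hf0 : ∀ r, 0 ≤ r → f r ≤ 0) (hg0 : ∀ r, 0 ≤ r → g r ≤ 0)
    (hf : ∀ r, 0 < r → HasDerivAt f (-K * radialMass n f r ^ p / r) r)
    (hg : ∀ r, 0 < r → HasDerivAt g (-K * radialMass n g r ^ p / r) r) :
    EqOn f g (Ici 0) := by
  intro b (hb : 0 ≤ b)
  obtain ⟨m, hm, hmf, hmg⟩ : ∃ m > 0,
      (∀ s ∈ Icc 0 b, m ≤ exp (f s)) ∧ ∀ s ∈ Icc 0 b, m ≤ exp (g s) := by
    obtain ⟨B, hB⟩ := isCompact_Icc.bddBelow_image (hfc.mono (Icc_subset_Ici_self : Icc 0 b ⊆ _))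
    obtain ⟨B', hB'⟩ := isCompact_Icc.bddBelow_image (hgc.mono (Icc_subset_Ici_self : Icc 0 b ⊆ _))
    refine ⟨exp (min B B'), exp_pos _, fun s hs => ?_, fun s hs => ?_⟩ <;> rw [exp_le_exp]
    · exact (min_le_left _ _).trans (hB (mem_image_of_mem f hs))
    · exact (min_le_right _ _).trans (hB' (mem_image_of_mem g hs))
  have hp0 : 0 < p := pos_of_mul_pos_right (hp.symm ▸ one_pos) (natCast_sub_one_pos hn).le
  have hL : 0 ≤ K * (p * (m / n) ^ (p - 1) / n * b ^ p) := by positivity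
  have key := eqOn_zero_of_abs_deriv_le (h := f - g) hL
    ((hfc.mono Icc_subset_Ici_self).sub (hgc.mono Icc_subset_Ici_self)) (by simp [h0])
    (fun t ht => (hf t ht.1).sub (hg t ht.1)) fun t ht M hM => by
      have hsub : Icc 0 t ⊆ Icc 0 b := Icc_subset_Icc_right ht.2.le
      have hest := abs_radialMass_rpow_div_sub_le hn hp hfc hgc ht.1
        (fun s hs => hf0 s hs.1) (fun s hs => hg0 s hs.1) hm
        (fun s hs => hmf s (hsub hs)) (fun s hs => hmg s (hsub hs)) hM
      have hM0 : 0 ≤ M := (abs_nonneg _).trans (hM 0 ⟨le_rfl, ht.1.le⟩)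
      calc |-K * radialMass n f t ^ p / t - -K * radialMass n g t ^ p / t|
          = K * |radialMass n f t ^ p / t - radialMass n g t ^ p / t| := by
            rw [show ∀ x y : ℝ, -K * x / t - -K * y / t = -K * (x / t - y / t) by intros; ring,
              abs_mul, abs_neg, abs_of_nonneg hK]
        _ ≤ K * (p * (m / n) ^ (p - 1) / n * t ^ p * M) := by gcongr
        _ ≤ K * (p * (m / n) ^ (p - 1) / n * b ^ p * M) := by gcongr; exacts [ht.1.le, ht.2.le]
        _ = K * (p * (m / n) ^ (p - 1) / n * b ^ p) * M := by ring
  exact sub_eq_zero.mp (key ⟨hb, le_rfl⟩)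

end radialMass

noncomputable def bubble (n : ℕ) (c r : ℝ) : ℝ :=
  -(n : ℝ) * log (1 + c * r ^ ((n : ℝ) / ((n : ℝ) - 1)))

section bubble

variable {n : ℕ} {c r : ℝ}

theorem one_le_one_add_mul_rpow (hc : 0 ≤ c) (hr : 0 ≤ r) (q : ℝ) : 1 ≤ 1 + c * r ^ q :=
  le_add_of_nonneg_right (mul_nonneg hc (rpow_nonneg hr q))

theorem continuousOn_bubble (hn : 2 ≤ n) (hc : 0 ≤ c) : ContinuousOn (bubble n c) (Ici 0) := by
  have hq : 0 ≤ (n : ℝ) / ((n : ℝ) - 1) := div_nonneg (by positivity) (natCast_sub_one_pos hn).le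
  refine continuousOn_const.mul (ContinuousOn.log (by fun_prop) fun r hr => ?_)
  linarith [one_le_one_add_mul_rpow hc hr ((n : ℝ) / ((n : ℝ) - 1))]

theorem bubble_zero (hn : 2 ≤ n) : bubble n c 0 = 0 := by
  have hq : (n : ℝ) / ((n : ℝ) - 1) ≠ 0 :=
    div_ne_zero (by have := natCast_sub_one_pos hn; positivity) (natCast_sub_one_pos hn).ne'
  simp [bubble, zero_rpow hq]

theorem bubble_nonpos (hc : 0 ≤ c) (hr : 0 ≤ r) : bubble n c r ≤ 0 := by
  have := log_nonneg (one_le_one_add_mul_rpow hc hr ((n : ℝ) / ((n : ℝ) - 1)))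
  simp only [bubble, neg_mul, neg_nonpos]
  positivity

theorem exp_bubble (hc : 0 ≤ c) (hr : 0 ≤ r) :
    exp (bubble n c r) = ((1 + c * r ^ ((n : ℝ) / ((n : ℝ) - 1))) ^ n)⁻¹ := by
  rw [bubble, neg_mul, exp_neg, exp_nat_mul,
    exp_log (zero_lt_one.trans_le (one_le_one_add_mul_rpow hc hr _))]

theorem hasDerivAt_bubble (hn : 2 ≤ n) (hc : 0 ≤ c) (hr : 0 < r) :
    HasDerivAt (bubble n c)
      (-(n * c * ((n : ℝ) / ((n : ℝ) - 1))) * r ^ (1 / ((n : ℝ) - 1)) /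
        (1 + c * r ^ ((n : ℝ) / ((n : ℝ) - 1)))) r := by
  set q := (n : ℝ) / ((n : ℝ) - 1)
  have hq : q - 1 = 1 / ((n : ℝ) - 1) := by
    have := (natCast_sub_one_pos hn).ne'
    simp only [q]
    field_simp
    ring
  have hu := ((hasDerivAt_rpow_const (p := q) (Or.inl hr.ne')).const_mul c).const_add 1
  refine ((hu.log (zero_lt_one.trans_le (one_le_one_add_mul_rpow hc hr.le q)).ne').const_mul
    (-(n : ℝ))).congr_deriv ?_
  rw [hq]
  ring

theorem hasDerivAt_pow_div_pow_one_add_mul_rpow (hn : 2 ≤ n) (hc : 0 ≤ c) (hr : 0 < r) :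
    HasDerivAt (fun t => t ^ n / (n * (1 + c * t ^ ((n : ℝ) / ((n : ℝ) - 1))) ^ (n - 1)))
      (r ^ (n - 1) * exp (bubble n c r)) r := by
  set q := (n : ℝ) / ((n : ℝ) - 1)
  set u : ℝ → ℝ := fun t => 1 + c * t ^ q
  obtain ⟨k, rfl⟩ : ∃ k, n = k + 2 := ⟨n - 2, by omega⟩
  have hu' : HasDerivAt u (c * (q * r ^ q / r)) r := by
    rw [mul_div_assoc, ← rpow_sub_one hr.ne']
    exact ((hasDerivAt_rpow_const (Or.inl hr.ne')).const_mul c).const_add 1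
  have hur : 0 < u r := zero_lt_one.trans_le (one_le_one_add_mul_rpow hc hr.le q)
  refine ((hasDerivAt_pow (k + 2) r).div ((hu'.pow (k + 2 - 1)).const_mul ((k + 2 : ℕ) : ℝ))
    (mul_ne_zero (by positivity) (pow_ne_zero _ hur.ne'))).congr_deriv ?_
  have hq : q = (k + 2) / (k + 1) := by simp only [q]; push_cast; ring_nf
  rw [exp_bubble hc hr.le]
  simp only [Pi.pow_apply, show k + 2 - 1 = k + 1 by omega, show k + 1 - 1 = k by omega]
  change _ = _ * (u r ^ (k + 2))⁻¹
  have hU : u r = 1 + c * r ^ q := rfl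
  generalize u r = U at hU hur ⊢
  generalize r ^ q = s at hU
  subst hU
  rw [hq]
  have := hr.ne'
  push_cast
  field_simp
  ring

theorem radialMass_bubble (hn : 2 ≤ n) (hc : 0 ≤ c) (hr : 0 ≤ r) :
    radialMass n (bubble n c) r =
      r ^ n / (n * (1 + c * r ^ ((n : ℝ) / ((n : ℝ) - 1))) ^ (n - 1)) := by
  have hq : 0 ≤ (n : ℝ) / ((n : ℝ) - 1) := div_nonneg (by positivity) (natCast_sub_one_pos hn).le
  have hcont : ContinuousOn
      (fun t => t ^ n / (n * (1 + c * t ^ ((n : ℝ) / ((n : ℝ) - 1))) ^ (n - 1))) (Icc 0 r) := by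
    refine ContinuousOn.div (by fun_prop) (by fun_prop) fun t ht => ?_
    have := one_le_one_add_mul_rpow hc ht.1 ((n : ℝ) / ((n : ℝ) - 1))
    have : (0 : ℝ) < n := by exact_mod_cast (by omega : 0 < n)
    positivity
  rw [radialMass, integral_eq_sub_of_hasDerivAt_of_le hr hcont
    (fun t ht => hasDerivAt_pow_div_pow_one_add_mul_rpow hn hc ht.1)
    (intervalIntegrable_radialMass_integrand (continuousOn_bubble hn hc) hr)]
  simp [zero_pow (by omega : n ≠ 0)]

theorem hasDerivAt_bubble_eq_neg_mul_radialMass_rpow_div (hn : 2 ≤ n) (hc : 0 ≤ c) (hr : 0 < r) :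
    HasDerivAt (bubble n c)
      (-(n * c * ((n : ℝ) / ((n : ℝ) - 1)) * (n : ℝ) ^ (1 / ((n : ℝ) - 1))) *
        radialMass n (bubble n c) r ^ (1 / ((n : ℝ) - 1)) / r) r := by
  refine (hasDerivAt_bubble hn hc hr).congr_deriv ?_
  obtain ⟨k, rfl⟩ : ∃ k, n = k + 2 := ⟨n - 2, by omega⟩
  set p := 1 / (((k + 2 : ℕ) : ℝ) - 1)
  set q := ((k + 2 : ℕ) : ℝ) / (((k + 2 : ℕ) : ℝ) - 1)
  have hp : p = ((k + 1 : ℕ) : ℝ)⁻¹ := by simp only [p]; push_cast; ring_nf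
  have hqp : q = (k + 2 : ℕ) * p := by simp only [p, q]; ring
  have hU : 0 < 1 + c * r ^ q := zero_lt_one.trans_le (one_le_one_add_mul_rpow hc hr.le q)
  have hmass : radialMass (k + 2) (bubble (k + 2) c) r ^ p =
      r ^ q / ((k + 2 : ℕ) ^ p * (1 + c * r ^ q)) := by
    rw [radialMass_bubble hn hc hr.le, show k + 2 - 1 = k + 1 by omega,
      div_rpow (by positivity) (by positivity), mul_rpow (by positivity) (by positivity), hp,
      pow_rpow_inv_natCast hU.le (by omega), ← hp, ← rpow_natCast, ← rpow_mul hr.le, ← hqp]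
  have hrq : r ^ q = r ^ p * r := by
    rw [← rpow_add_one hr.ne', hqp, hp]
    push_cast
    field_simp
    ring_nf
  rw [hmass, hrq]
  field_simp

end bubble

theorem stmt_19 (n : ℕ) (hn : 2 ≤ n) (ω α c : ℝ)
    (hω : ω = n * (volume (Metric.ball (0 : EuclideanSpace ℝ (Fin n)) 1)).toReal)
    (hα : α = n * ω ^ ((1 : ℝ) / ((n : ℝ) - 1)))
    (hc : c = (ω / n) ^ ((1 : ℝ) / ((n : ℝ) - 1)))
    (w : EuclideanSpace ℝ (Fin n) → ℝ) (f f' : ℝ → ℝ)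
    (hw : ∀ x, w x = f ‖x‖)
    (hC1 : ContDiff ℝ 1 w)
    (hfc : ContinuousOn f (Set.Ici 0))
    (hf' : ∀ r : ℝ, 0 < r → HasDerivAt f (f' r) r)
    (hode : ∀ r : ℝ, 0 < r →
      HasDerivAt (fun s => s ^ (n - 1) * |f' s| ^ (n - 2) * f' s)
        (-(r ^ (n - 1) * ((n * α) / ((n : ℝ) - 1)) ^ (n - 1) * Real.exp (f r))) r)
    (h0 : f 0 = 0) (hmax : ∀ x, w x ≤ 0) :
    ∀ x, w x = -(n : ℝ) * Real.log (1 + c * ‖x‖ ^ ((n : ℝ) / ((n : ℝ) - 1))) := by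
  have : NeZero n := ⟨by omega⟩
  have hn1 := natCast_sub_one_pos hn
  have hω0 : 0 < ω := hω ▸ mul_pos (by positivity)
    (ENNReal.toReal_pos (Metric.measure_ball_pos _ _ one_pos).ne' measure_ball_lt_top.ne)
  have hc0 : 0 < c := hc ▸ rpow_pos_of_pos (div_pos hω0 (by positivity)) _
  set K := (n * α) / ((n : ℝ) - 1) with hK_def
  have hK : K = n * c * (n / (n - 1)) * n ^ (1 / ((n : ℝ) - 1)) := by
    rw [hK_def, hα, hc, div_rpow hω0.le (Nat.cast_nonneg n)]
    field_simp
  have hK0 : 0 ≤ K := by rw [hK_def, hα]; positivity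
  obtain ⟨D, hDc, hfD⟩ := exists_continuous_hasDerivAt_of_contDiff_comp_norm hw hC1
  have hodeD : ∀ r, 0 < r → HasDerivAt (fun s => s ^ (n - 1) * |D s| ^ (n - 2) * D s)
      (-(r ^ (n - 1) * K ^ (n - 1) * exp (f r))) r := fun r hr =>
    (hode r hr).congr_of_eventuallyEq <| eventually_of_mem (Ioi_mem_nhds hr) fun s hs => by
      simp only [(hf' s hs).unique (hfD s hs)]
  have hf : ∀ r, 0 < r → HasDerivAt f (-K * radialMass n f r ^ (1 / ((n : ℝ) - 1)) / r) r :=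
    fun r hr => eq_neg_mul_radialMass_rpow_div hn hK0 hfc hDc hodeD hr ▸ hfD r hr
  have hf0 : ∀ r, 0 ≤ r → f r ≤ 0 := fun r hr => by
    obtain ⟨x, rfl⟩ := exists_norm_eq (EuclideanSpace ℝ (Fin n)) hr
    exact hw x ▸ hmax x
  have hfF := eqOn_of_hasDerivAt_neg_mul_radialMass_rpow_div hn (by field_simp) hK0 hfc
    (continuousOn_bubble hn hc0.le) (h0.trans (bubble_zero hn).symm) hf0
    (fun r hr => bubble_nonpos hc0.le hr) hf
    (fun r hr => hK ▸ hasDerivAt_bubble_eq_neg_mul_radialMass_rpow_div hn hc0.le hr)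
  intro x
  rw [hw, hfF (norm_nonneg x), bubble]
end
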